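/- arXiv:2502.16509 — 3 statements merged into one kernel-verified Lean document; each statement's English description precedes it below -/
import Mathlib

section
/- Let U ∈ ℂ^{N×M} and H_r ∈ ℂ^{M×N} satisfy U^H U = H_r H_r^H and U^T H_r^H = (U^T H_r^H)^T. Define the real matrices M_U = [Re(i Z₀ (H_r^H + U)), Im(i Z₀ (H_r^H + U))] ∈ ℝ^{N×2M} and Γ_U = [Re(U − H_r^H), Im(U − H_r^H)] ∈ ℝ^{N×2M}, where Z₀ > 0 is real. Then M_U^T Γ_U = Γ_U^T M_U, i.e., M_U^T Γ_U is a symmetric real matrix. -/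
open Matrix

/-- The real matrix `M_U = [Re(i Z₀ (H_rᴴ + U)), Im(i Z₀ (H_rᴴ + U))]`. -/
noncomputable def MU (N M : ℕ) (Z₀ : ℝ) (Hr : Matrix (Fin M) (Fin N) ℂ)
    (U : Matrix (Fin N) (Fin M) ℂ) : Matrix (Fin N) (Fin M ⊕ Fin M) ℝ :=
  Matrix.fromCols
    (((Complex.I * (Z₀ : ℂ)) • (Hrᴴ + U)).map Complex.re)
    (((Complex.I * (Z₀ : ℂ)) • (Hrᴴ + U)).map Complex.im)

/-- The real matrix `Γ_U = [Re(U − H_rᴴ), Im(U − H_rᴴ)]`. -/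
noncomputable def GammaU (N M : ℕ) (Hr : Matrix (Fin M) (Fin N) ℂ)
    (U : Matrix (Fin N) (Fin M) ℂ) : Matrix (Fin N) (Fin M ⊕ Fin M) ℝ :=
  Matrix.fromCols ((U - Hrᴴ).map Complex.re) ((U - Hrᴴ).map Complex.im)

/-- Key abstract lemma: if `Aᵀ B` is symmetric and `Aᴴ B` is Hermitian, then the
real matrix `[Re A, Im A]ᵀ [Re B, Im B]` is symmetric. -/
lemma aux_main_stmt4 {N M : ℕ} (A B : Matrix (Fin N) (Fin M) ℂ)
    (hS : Aᵀ * B = (Aᵀ * B)ᵀ) (hH : (Aᴴ * B)ᴴ = Aᴴ * B) :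
    (Matrix.fromCols (A.map Complex.re) (A.map Complex.im))ᵀ *
      Matrix.fromCols (B.map Complex.re) (B.map Complex.im) =
    (Matrix.fromCols (B.map Complex.re) (B.map Complex.im))ᵀ *
      Matrix.fromCols (A.map Complex.re) (A.map Complex.im) := by
  have hs : ∀ j k, ∑ n, A n j * B n k = ∑ n, A n k * B n j := by
    intro j k
    have := congrFun (congrFun hS j) k
    simpa [mul_apply, transpose_apply] using this
  have hh : ∀ j k, ∑ n, A n k * (starRingEnd ℂ) (B n j)
      = ∑ n, (starRingEnd ℂ) (A n j) * B n k := by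
    intro j k
    have := congrFun (congrFun hH j) k
    simpa [mul_apply, conjTranspose_apply, transpose_apply] using this
  have key : ∀ j k,
      (∑ n, (A n j).re * (B n k).re = ∑ n, (A n k).re * (B n j).re) ∧
      (∑ n, (A n j).im * (B n k).im = ∑ n, (A n k).im * (B n j).im) ∧
      (∑ n, (A n j).re * (B n k).im = ∑ n, (A n k).im * (B n j).re) := by
    intro j k
    have hsre := congrArg Complex.re (hs j k)
    have hsim := congrArg Complex.im (hs j k)
    have hhre := congrArg Complex.re (hh j k)
    have hhim := congrArg Complex.im (hh j k)
    simp only [Complex.re_sum, Complex.im_sum, Complex.mul_re, Complex.mul_im,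
      Complex.conj_re, Complex.conj_im, neg_mul, mul_neg, sub_neg_eq_add,
      Finset.sum_sub_distrib, Finset.sum_add_distrib, Finset.sum_neg_distrib,
      neg_add_eq_sub] at hsre hsim hhre hhim
    refine ⟨by linarith, by linarith, by linarith⟩
  have comm : ∀ (f g : Fin N → ℝ), ∑ n, f n * g n = ∑ n, g n * f n := by
    intro f g; simp [mul_comm]
  ext j k
  cases j with
  | inl j =>
    cases k with
    | inl k =>
      simp only [mul_apply, fromCols, transpose_apply, of_apply, map_apply,
        Sum.elim_inl, Sum.elim_inr]
      exact ((key j k).1).trans (comm _ _)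
    | inr k =>
      simp only [mul_apply, fromCols, transpose_apply, of_apply, map_apply,
        Sum.elim_inl, Sum.elim_inr]
      exact ((key j k).2.2).trans (comm _ _)
  | inr j =>
    cases k with
    | inl k =>
      simp only [mul_apply, fromCols, transpose_apply, of_apply, map_apply,
        Sum.elim_inl, Sum.elim_inr]
      exact (key k j).2.2.symm.trans (comm _ _)
    | inr k =>
      simp only [mul_apply, fromCols, transpose_apply, of_apply, map_apply,
        Sum.elim_inl, Sum.elim_inr]
      exact ((key j k).2.1).trans (comm _ _)

/-- If `Uᴴ U = H_r H_rᴴ` and `Uᵀ H_rᴴ` is symmetric, then `M_Uᵀ Γ_U` is a symmetric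
real matrix, i.e. `M_Uᵀ Γ_U = Γ_Uᵀ M_U`. -/
theorem stmt4 (N M : ℕ) (Z₀ : ℝ) (hZ : 0 < Z₀)
    (Hr : Matrix (Fin M) (Fin N) ℂ) (U : Matrix (Fin N) (Fin M) ℂ)
    (h1 : Uᴴ * U = Hr * Hrᴴ) (h2 : Uᵀ * Hrᴴ = (Uᵀ * Hrᴴ)ᵀ) :
    (MU N M Z₀ Hr U)ᵀ * GammaU N M Hr U = (GammaU N M Hr U)ᵀ * MU N M Z₀ Hr U := by
  have hc : True := trivial
  let c : ℂ := Complex.I * (Z₀ : ℂ)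
  let A : Matrix (Fin N) (Fin M) ℂ := c • (Hrᴴ + U)
  let B : Matrix (Fin N) (Fin M) ℂ := U - Hrᴴ
  have hA : A = c • (Hrᴴ + U) := rfl
  have hB : B = U - Hrᴴ := rfl
  have h2' : Uᵀ * Hrᴴ = (Hrᴴ)ᵀ * U := by
    conv_lhs => rw [h2]
    rw [transpose_mul, transpose_transpose]
  have key1 : Aᵀ * B = c • (Uᵀ * U - (Hrᴴ)ᵀ * Hrᴴ) := by
    rw [hA, hB, transpose_smul, Matrix.smul_mul]
    congr 1
    rw [transpose_add, Matrix.add_mul, Matrix.mul_sub, Matrix.mul_sub, h2']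
    abel
  have hS : Aᵀ * B = (Aᵀ * B)ᵀ := by
    rw [key1, transpose_smul, transpose_sub, transpose_mul, transpose_mul,
      transpose_transpose, transpose_transpose]
  have key2 : Aᴴ * B = (-c) • (Hr * U - Uᴴ * Hrᴴ) := by
    have hcc : star c = -c := by
      simp [c, Complex.ext_iff]
    rw [hA, hB, conjTranspose_smul, hcc, Matrix.smul_mul]
    congr 1
    rw [conjTranspose_add, conjTranspose_conjTranspose, Matrix.add_mul, Matrix.mul_sub,
      Matrix.mul_sub, h1]
    abel
  have hH : (Aᴴ * B)ᴴ = Aᴴ * B := by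
    have hcc : star (-c) = c := by
      simp [c, Complex.ext_iff]
    simp only [key2, conjTranspose_smul, hcc, conjTranspose_sub, conjTranspose_mul,
      conjTranspose_mul, conjTranspose_conjTranspose]
    rw [neg_smul, ← smul_neg, neg_sub]
  have := aux_main_stmt4 A B hS hH
  simpa [MU, GammaU, hA, hB, c] using this
end

section
/- Let η₁, η₂, γ₁, γ₂ ∈ ℝ, ξ₁, ξ₂, f, g ∈ ℝ^m, and let D ∈ ℝ^{m×m} be invertible. Assume both bordered matrices M₁ = [[η₁, f^T], [ξ₁, D]] and M₂ = [[η₂, f^T], [ξ₂, D]] are invertible. Then (η₁ − f^T D^{-1} ξ₁) · (γ₂ − [γ₁, g^T] M₁^{-1} [η₂; ξ₂]) + (η₂ − f^T D^{-1} ξ₂) · (γ₁ − [γ₂, g^T] M₂^{-1} [η₁; ξ₁]) = 0. -/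
open Matrix

/-- The bordered matrix `[[η, fᵀ], [ξ, D]]`. -/
def bordered {m : ℕ} (η : ℝ) (f ξ : Fin m → ℝ) (D : Matrix (Fin m) (Fin m) ℝ) :
    Matrix (Unit ⊕ Fin m) (Unit ⊕ Fin m) ℝ :=
  Matrix.fromBlocks (Matrix.of fun _ _ => η) (Matrix.of fun _ j => f j)
    (Matrix.of fun i _ => ξ i) D

lemma bordered_det {m : ℕ} (η : ℝ) (f ξ : Fin m → ℝ) (D : Matrix (Fin m) (Fin m) ℝ)
    (hD : IsUnit D.det) :
    (bordered η f ξ D).det = D.det * (η - f ⬝ᵥ (D⁻¹ *ᵥ ξ)) := by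
  haveI : Invertible D := D.invertibleOfIsUnitDet hD
  rw [bordered, Matrix.det_fromBlocks₂₂, Matrix.invOf_eq_nonsing_inv]
  congr 1
  rw [Matrix.det_unique, Matrix.mul_assoc]
  simp [Matrix.mul_apply, Matrix.mulVec, dotProduct]

lemma bordered_inv_mulVec {m : ℕ} (η η' : ℝ) (f ξ ξ' : Fin m → ℝ)
    (D : Matrix (Fin m) (Fin m) ℝ) (hD : IsUnit D.det)
    (hM : IsUnit (bordered η f ξ D).det) :
    (bordered η f ξ D)⁻¹ *ᵥ (Sum.elim (fun _ => η') ξ') =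
      Sum.elim (fun _ => (η' - f ⬝ᵥ (D⁻¹ *ᵥ ξ')) / (η - f ⬝ᵥ (D⁻¹ *ᵥ ξ)))
        ((D⁻¹ *ᵥ ξ') - ((η' - f ⬝ᵥ (D⁻¹ *ᵥ ξ')) / (η - f ⬝ᵥ (D⁻¹ *ᵥ ξ))) • (D⁻¹ *ᵥ ξ)) := by
  haveI : Invertible D := D.invertibleOfIsUnitDet hD
  set s := η - f ⬝ᵥ (D⁻¹ *ᵥ ξ) with hs
  set s' := η' - f ⬝ᵥ (D⁻¹ *ᵥ ξ') with hs'
  have hsne : s ≠ 0 := by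
    intro h
    rw [bordered_det η f ξ D hD, ← hs, h, mul_zero] at hM
    exact hM.ne_zero rfl
  set c := s' / s with hc
  set y : Fin m → ℝ := (D⁻¹ *ᵥ ξ') - c • (D⁻¹ *ᵥ ξ) with hy
  have hDD : D *ᵥ (D⁻¹ *ᵥ ξ) = ξ := by
    rw [Matrix.mulVec_mulVec, Matrix.mul_nonsing_inv D hD, Matrix.one_mulVec]
  have hDD' : D *ᵥ (D⁻¹ *ᵥ ξ') = ξ' := by
    rw [Matrix.mulVec_mulVec, Matrix.mul_nonsing_inv D hD, Matrix.one_mulVec]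
  have key : (bordered η f ξ D) *ᵥ (Sum.elim (fun _ => c) y) = Sum.elim (fun _ => η') ξ' := by
    rw [bordered, Matrix.fromBlocks_mulVec]
    have e1 : (Sum.elim (fun (_ : Unit) => c) y) ∘ Sum.inl = fun _ => c := rfl
    have e2 : (Sum.elim (fun (_ : Unit) => c) y) ∘ Sum.inr = y := rfl
    rw [e1, e2]
    have hfy : f ⬝ᵥ y = f ⬝ᵥ (D⁻¹ *ᵥ ξ') - c * (f ⬝ᵥ (D⁻¹ *ᵥ ξ)) := by
      rw [hy, dotProduct_sub, dotProduct_smul, smul_eq_mul]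
    have h4 : D *ᵥ y = ξ' - c • ξ := by
      rw [hy, Matrix.mulVec_sub, Matrix.mulVec_smul, hDD, hDD']
    ext (u | i)
    · simp only [Sum.elim_inl, Pi.add_apply]
      have h1 : ((Matrix.of fun (_ _ : Unit) => η) *ᵥ fun _ => c) u = η * c := by
        simp [Matrix.mulVec, dotProduct]
      have h2 : ((Matrix.of fun (_ : Unit) j => f j) *ᵥ y) u = f ⬝ᵥ y := rfl
      have ha : f ⬝ᵥ (D⁻¹ *ᵥ ξ) = η - s := by rw [hs]; ring
      have ha' : f ⬝ᵥ (D⁻¹ *ᵥ ξ') = η' - s' := by rw [hs']; ring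
      rw [h1, h2, hfy, ha, ha', hc]
      field_simp
      ring
    · simp only [Sum.elim_inr, Pi.add_apply]
      have h3 : ((Matrix.of fun i (_ : Unit) => ξ i) *ᵥ fun _ => c) i = ξ i * c := by
        simp [Matrix.mulVec, dotProduct]
      rw [h3, h4]
      simp only [Pi.sub_apply, Pi.smul_apply, smul_eq_mul]
      ring
  have := congrArg (fun v => (bordered η f ξ D)⁻¹ *ᵥ v) key
  simp only [Matrix.mulVec_mulVec, Matrix.nonsing_inv_mul _ hM, Matrix.one_mulVec] at this
  exact this.symm

/-- Antisymmetry identity: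
`(η₁ − fᵀD⁻¹ξ₁)(γ₂ − [γ₁,gᵀ] M₁⁻¹ [η₂;ξ₂]) + (η₂ − fᵀD⁻¹ξ₂)(γ₁ − [γ₂,gᵀ] M₂⁻¹ [η₁;ξ₁]) = 0`. -/
theorem stmt9 (m : ℕ) (η₁ η₂ γ₁ γ₂ : ℝ) (ξ₁ ξ₂ f g : Fin m → ℝ)
    (D : Matrix (Fin m) (Fin m) ℝ) (hD : IsUnit D.det)
    (hM₁ : IsUnit (bordered η₁ f ξ₁ D).det)
    (hM₂ : IsUnit (bordered η₂ f ξ₂ D).det) :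
    (η₁ - f ⬝ᵥ (D⁻¹ *ᵥ ξ₁)) *
        (γ₂ - (Sum.elim (fun _ => γ₁) g) ⬝ᵥ
          ((bordered η₁ f ξ₁ D)⁻¹ *ᵥ (Sum.elim (fun _ => η₂) ξ₂))) +
      (η₂ - f ⬝ᵥ (D⁻¹ *ᵥ ξ₂)) *
        (γ₁ - (Sum.elim (fun _ => γ₂) g) ⬝ᵥ
          ((bordered η₂ f ξ₂ D)⁻¹ *ᵥ (Sum.elim (fun _ => η₁) ξ₁))) = 0 := by
  set s₁ := η₁ - f ⬝ᵥ (D⁻¹ *ᵥ ξ₁) with hs₁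
  set s₂ := η₂ - f ⬝ᵥ (D⁻¹ *ᵥ ξ₂) with hs₂
  have hs₁ne : s₁ ≠ 0 := by
    intro h
    rw [bordered_det η₁ f ξ₁ D hD, ← hs₁, h, mul_zero] at hM₁
    exact hM₁.ne_zero rfl
  have hs₂ne : s₂ ≠ 0 := by
    intro h
    rw [bordered_det η₂ f ξ₂ D hD, ← hs₂, h, mul_zero] at hM₂
    exact hM₂.ne_zero rfl
  rw [bordered_inv_mulVec η₁ η₂ f ξ₁ ξ₂ D hD hM₁, bordered_inv_mulVec η₂ η₁ f ξ₂ ξ₁ D hD hM₂]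
  rw [sumElim_dotProduct_sumElim, sumElim_dotProduct_sumElim]
  rw [dotProduct_sub, dotProduct_sub, dotProduct_smul, dotProduct_smul]
  have hu : ∀ a b : ℝ, (fun (_ : Unit) => a) ⬝ᵥ (fun _ => b) = a * b := by
    intro a b; simp [dotProduct]
  rw [hu, hu, ← hs₁, ← hs₂]
  set t₁ := g ⬝ᵥ (D⁻¹ *ᵥ ξ₁)
  set t₂ := g ⬝ᵥ (D⁻¹ *ᵥ ξ₂)
  simp only [smul_eq_mul]
  field_simp
  ring
end

section
/- A simple graph G on N vertices (N ≥ 2), with vertices labeled V₁,…,V_N and adjacency matrix A_G (a symmetric 0–1 matrix with zero diagonal, A_G(n,m)=1 iff V_n and V_m are adjacent), is a tree if and only if there exists an N×N permutation matrix P such that A_G = P Ā P^T where Ā is a symmetric 0–1 matrix with zero diagonal satisfying Σ_{m=n+1}^{N} Ā(n,m) = 1 for every n with 1 ≤ n ≤ N−1. -/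
open Matrix BigOperators

/-- The 0–1 adjacency matrix of a simple graph on `Fin N`. -/
def adjMatrix' (N : ℕ) (G : SimpleGraph (Fin N)) [DecidableRel G.Adj] :
    Matrix (Fin N) (Fin N) ℕ :=
  Matrix.of fun n m => if G.Adj n m then 1 else 0

/-- The permutation matrix of `σ`, with `P i j = 1` iff `i = σ j`. -/
def permMatrix' (N : ℕ) (σ : Equiv.Perm (Fin N)) : Matrix (Fin N) (Fin N) ℕ :=
  Matrix.of fun i j => if i = σ j then 1 else 0

section Aux

open SimpleGraph

variable {V : Type*} [DecidableEq V] {G : SimpleGraph V}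

/-- In a tree, any path realizes the distance. -/
lemma tree_dist_eq (hG : G.IsTree) {u v : V} (p : G.Walk u v) (hp : p.IsPath) :
    G.dist u v = p.length := by
  obtain ⟨w, hw⟩ := hG.isConnected.exists_walk_length_eq_dist u v
  obtain ⟨q, hq, huniq⟩ := hG.existsUnique_path u v
  have h1 : w.bypass = q := huniq _ w.bypass_isPath
  have h2 : p = q := huniq _ hp
  refine le_antisymm (SimpleGraph.dist_le p) ?_
  calc p.length = w.bypass.length := by rw [h1, h2]
    _ ≤ w.length := w.length_bypass_le
    _ = G.dist u v := hw

/-- In a tree, every non-root vertex has a unique neighbor weakly closer to the root. -/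
lemma tree_parent (hG : G.IsTree) (r : V) {v : V} (hv : v ≠ r) :
    ∃ w : V, G.Adj v w ∧ G.dist r w + 1 = G.dist r v ∧
      ∀ w', G.Adj v w' → G.dist r w' ≤ G.dist r v → w' = w := by
  obtain ⟨p, hp, huniq⟩ := hG.existsUnique_path r v
  have hpn : ¬ p.reverse.Nil := by
    rw [SimpleGraph.Walk.nil_iff_length_eq, SimpleGraph.Walk.length_reverse]
    intro h
    exact hv (SimpleGraph.Walk.eq_of_length_eq_zero h).symm
  obtain ⟨w, hadj, q, hdec⟩ := SimpleGraph.Walk.not_nil_iff.mp hpn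
  have hqpath : q.IsPath ∧ v ∉ q.support := by
    have := hp.reverse
    rw [hdec, SimpleGraph.Walk.cons_isPath_iff] at this
    exact this
  have hdistw : G.dist r w = q.length := by
    rw [SimpleGraph.dist_comm]; exact tree_dist_eq hG q hqpath.1
  have hdistv : G.dist r v = q.length + 1 := by
    have h3 := tree_dist_eq hG p hp
    have h4 := congrArg SimpleGraph.Walk.length hdec
    rw [SimpleGraph.Walk.length_reverse, SimpleGraph.Walk.length_cons] at h4
    omega
  refine ⟨w, hadj, by omega, ?_⟩
  intro w' hadj' hdle
  obtain ⟨pw, hpw, _⟩ := hG.existsUnique_path r w'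
  have hdistw' : G.dist r w' = pw.length := tree_dist_eq hG pw hpw
  by_cases hvm : v ∈ pw.support
  · exfalso
    have ht : G.dist r v ≤ (pw.takeUntil v hvm).length :=
      SimpleGraph.dist_le _
    have hspec := pw.take_spec hvm
    have hlen : (pw.takeUntil v hvm).length + (pw.dropUntil v hvm).length = pw.length := by
      have := congrArg SimpleGraph.Walk.length hspec
      rwa [SimpleGraph.Walk.length_append] at this
    have hdpos : 0 < (pw.dropUntil v hvm).length := by
      rcases Nat.eq_zero_or_pos (pw.dropUntil v hvm).length with h0 | h
      · exact absurd (SimpleGraph.Walk.eq_of_length_eq_zero h0) hadj'.ne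
      · exact h
    omega
  · have hcpath : (SimpleGraph.Walk.cons hadj' pw.reverse).IsPath := by
      rw [SimpleGraph.Walk.cons_isPath_iff]
      refine ⟨hpw.reverse, ?_⟩
      rw [SimpleGraph.Walk.support_reverse, List.mem_reverse]
      exact hvm
    have heq : (SimpleGraph.Walk.cons hadj' pw.reverse).reverse = p :=
      huniq _ hcpath.reverse
    have heq2 : SimpleGraph.Walk.cons hadj q = SimpleGraph.Walk.cons hadj' pw.reverse := by
      rw [← hdec, ← heq, SimpleGraph.Walk.reverse_reverse]
    have hsup := congrArg SimpleGraph.Walk.support heq2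
    rw [SimpleGraph.Walk.support_cons, SimpleGraph.Walk.support_cons] at hsup
    have hsup2 : q.support = pw.reverse.support := by
      simpa using hsup
    rw [q.support_eq_cons, pw.reverse.support_eq_cons] at hsup2
    exact (List.cons.injEq _ _ _ _ ▸ hsup2).1.symm ▸ rfl

lemma forward_order {N : ℕ} (hN : 2 ≤ N) (G : SimpleGraph (Fin N)) (hG : G.IsTree) :
    ∃ σ : Equiv.Perm (Fin N), ∀ n : Fin N, (n : ℕ) < N - 1 →
      ∃! m : Fin N, n < m ∧ G.Adj (σ n) (σ m) := by
  classical
  set r : Fin N := ⟨0, by omega⟩ with hr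
  have hdlt : ∀ v : Fin N, G.dist r v < N := by
    intro v
    obtain ⟨p, hp, _⟩ := hG.existsUnique_path r v
    have h1 := tree_dist_eq hG p hp
    have h2 : p.support.length ≤ N := by
      simpa using hp.support_nodup.length_le_card
    rw [SimpleGraph.Walk.length_support] at h2
    omega
  set f : Fin N → ℕ := fun v => N - G.dist r v with hf
  set σ : Equiv.Perm (Fin N) := Tuple.sort f with hσ
  have mono := Tuple.monotone_sort f
  have key : ∀ {n m : Fin N}, n ≤ m → G.dist r (σ m) ≤ G.dist r (σ n) := by
    intro n m h
    have h0 : f (σ n) ≤ f (σ m) := mono h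
    simp only [hf] at h0
    have h1 := hdlt (σ n)
    have h2 := hdlt (σ m)
    omega
  refine ⟨σ, ?_⟩
  intro n hn
  have hlast : ((⟨N - 1, by omega⟩ : Fin N) : ℕ) = N - 1 := rfl
  have hvr : σ n ≠ r := by
    intro h
    have hle : n ≤ (⟨N - 1, by omega⟩ : Fin N) := by
      rw [Fin.le_def]; simp; omega
    have := key hle
    rw [h] at this
    have h0 : G.dist r r = 0 := SimpleGraph.dist_self
    have : G.dist r (σ ⟨N - 1, by omega⟩) = 0 := by omega
    have heq : σ ⟨N - 1, by omega⟩ = r :=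
      (hG.isConnected.dist_eq_zero_iff.mp this).symm
    have : (⟨N - 1, by omega⟩ : Fin N) = n := σ.injective (heq.trans h.symm)
    rw [Fin.ext_iff] at this
    simp at this
    omega
  obtain ⟨w, hadj, hdist, huniq⟩ := tree_parent hG r hvr
  refine ⟨σ.symm w, ⟨?_, by simpa using hadj⟩, ?_⟩
  · by_contra hle
    push_neg at hle
    have := key hle
    simp only [Equiv.apply_symm_apply] at this
    omega
  · rintro m ⟨hm1, hm2⟩
    have hd := key (le_of_lt hm1)
    have := huniq (σ m) hm2 hd
    rw [← this]
    simp

lemma backward_tree {N : ℕ} (hN : 2 ≤ N) (G : SimpleGraph (Fin N)) (σ : Equiv.Perm (Fin N))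
    (h : ∀ n : Fin N, (n : ℕ) < N - 1 → ∃! m : Fin N, n < m ∧ G.Adj (σ n) (σ m)) :
    G.IsTree := by
  classical
  have hNpos : 0 < N := by omega
  set top : Fin N := σ ⟨N - 1, by omega⟩ with htop
  have reach : ∀ (k : ℕ) (v : Fin N), N - 1 - (σ.symm v : ℕ) ≤ k → G.Reachable v top := by
    intro k
    induction k with
    | zero =>
      intro v hv
      have h1 : (σ.symm v : ℕ) < N := (σ.symm v).isLt
      have h2 : σ.symm v = ⟨N - 1, by omega⟩ := by
        apply Fin.ext
        show (σ.symm v : ℕ) = N - 1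
        omega
      have : v = top := by rw [htop, ← h2, Equiv.apply_symm_apply]
      exact this ▸ Reachable.refl _
    | succ k ih =>
      intro v hv
      by_cases hc : (σ.symm v : ℕ) = N - 1
      · have h2 : σ.symm v = ⟨N - 1, by omega⟩ := Fin.ext hc
        have : v = top := by rw [htop, ← h2, Equiv.apply_symm_apply]
        exact this ▸ Reachable.refl _
      · have h1 : (σ.symm v : ℕ) < N := (σ.symm v).isLt
        obtain ⟨m, ⟨hm1, hm2⟩, _⟩ := h (σ.symm v) (by omega)
        rw [Equiv.apply_symm_apply] at hm2
        have hmr : G.Reachable (σ m) top := by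
          apply ih
          have hlt : (σ.symm v : ℕ) < (m : ℕ) := hm1
          have : (m : ℕ) < N := m.isLt
          simp only [Equiv.symm_apply_apply]
          omega
        exact hm2.reachable.trans hmr
  have hconn : G.Connected := by
    have : Nonempty (Fin N) := ⟨⟨0, hNpos⟩⟩
    rw [SimpleGraph.connected_iff]
    refine ⟨fun u v => (reach _ u le_rfl).trans (reach _ v le_rfl).symm, this⟩
  refine ⟨hconn, ?_⟩
  intro v c hc
  set T : Finset (Fin N) := c.support.toFinset with hT
  obtain ⟨x, hxT, hxmin⟩ := T.exists_min_image (fun y => (σ.symm y : ℕ))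
    ⟨v, List.mem_toFinset.mpr c.start_mem_support⟩
  have hx : x ∈ c.support := List.mem_toFinset.mp hxT
  have hc' := hc.rotate hx
  have hsup : ∀ y, y ∈ (c.rotate x hx).support → y ∈ c.support := by
    intro y hy
    rw [SimpleGraph.Walk.support_eq_cons] at hy
    rcases List.mem_cons.mp hy with rfl | hy
    · exact hx
    · have := (SimpleGraph.Walk.support_rotate c x hx).mem_iff.mp hy
      rw [SimpleGraph.Walk.support_eq_cons c] at *
      exact List.mem_cons_of_mem _ this
  obtain ⟨u, hadj, q, hdec⟩ := SimpleGraph.Walk.not_nil_iff.mp hc'.not_nil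
  rw [hdec, SimpleGraph.Walk.cons_isCycle_iff] at hc'
  obtain ⟨hqpath, hedge⟩ := hc'
  have hqn : ¬ q.reverse.Nil := by
    rw [SimpleGraph.Walk.nil_iff_length_eq, SimpleGraph.Walk.length_reverse]
    intro h0
    exact hadj.ne' (SimpleGraph.Walk.eq_of_length_eq_zero h0)
  obtain ⟨w, hadj2, q2, hdec2⟩ := SimpleGraph.Walk.not_nil_iff.mp hqn
  have hwe : s(x, w) ∈ q.edges := by
    have : s(x, w) ∈ q.reverse.edges := by
      rw [hdec2, SimpleGraph.Walk.edges_cons]; exact List.mem_cons_self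
    rwa [SimpleGraph.Walk.edges_reverse, List.mem_reverse] at this
  have huw : u ≠ w := by
    rintro rfl
    exact hedge hwe
  have humem : u ∈ c.support := by
    apply hsup
    rw [hdec, SimpleGraph.Walk.support_cons]
    exact List.mem_cons_of_mem _ q.start_mem_support
  have hwmem : w ∈ c.support := by
    apply hsup
    rw [hdec, SimpleGraph.Walk.support_cons]
    apply List.mem_cons_of_mem
    have : w ∈ q.reverse.support := by
      rw [hdec2, SimpleGraph.Walk.support_cons]
      exact List.mem_cons_of_mem _ q2.start_mem_support
    rwa [SimpleGraph.Walk.support_reverse, List.mem_reverse] at this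
  -- x is strictly minimal among u, w
  have hxu : (σ.symm x : ℕ) < (σ.symm u : ℕ) := by
    have h1 := hxmin u (List.mem_toFinset.mpr humem)
    have h2 : σ.symm x ≠ σ.symm u := fun he => hadj.ne (σ.symm.injective he)
    have := Fin.val_ne_of_ne h2
    omega
  have hxw : (σ.symm x : ℕ) < (σ.symm w : ℕ) := by
    have h1 := hxmin w (List.mem_toFinset.mpr hwmem)
    have h2 : σ.symm x ≠ σ.symm w := fun he => hadj2.ne (σ.symm.injective he)
    have := Fin.val_ne_of_ne h2
    omega
  have hn : (σ.symm x : ℕ) < N - 1 := by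
    have := (σ.symm u).isLt
    omega
  obtain ⟨m, _, hmu⟩ := h (σ.symm x) hn
  have hu' : σ.symm u = m := by
    apply hmu
    constructor
    · exact Fin.lt_def.mpr hxu
    · simpa using hadj
  have hw' : σ.symm w = m := by
    apply hmu
    constructor
    · exact Fin.lt_def.mpr hxw
    · simpa using hadj2
  exact huw (σ.symm.injective (hu'.trans hw'.symm))

end Aux

lemma perm_conj (N : ℕ) (σ : Equiv.Perm (Fin N)) (Abar : Matrix (Fin N) (Fin N) ℕ)
    (i j : Fin N) :
    (permMatrix' N σ * Abar * (permMatrix' N σ)ᵀ) i j = Abar (σ.symm i) (σ.symm j) := by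
  have inner : ∀ k, ((permMatrix' N σ * Abar) i k) = Abar (σ.symm i) k := by
    intro k
    rw [Matrix.mul_apply, Finset.sum_eq_single (σ.symm i)]
    · simp [permMatrix']
    · intro b _ hb
      have : i ≠ σ b := fun he => hb (by rw [he]; simp)
      simp [permMatrix', this]
    · simp
  rw [Matrix.mul_apply, Finset.sum_eq_single (σ.symm j)]
  · rw [inner]; simp [permMatrix']
  · intro b _ hb
    have : j ≠ σ b := fun he => hb (by rw [he]; simp)
    simp [permMatrix', this]
  · simp

lemma forward_exists (N : ℕ) (G : SimpleGraph (Fin N)) [DecidableRel G.Adj]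
    (σ : Equiv.Perm (Fin N))
    (horder : ∀ n : Fin N, (n : ℕ) < N - 1 → ∃! m : Fin N, n < m ∧ G.Adj (σ n) (σ m)) :
      ∃ (σ : Equiv.Perm (Fin N)) (Abar : Matrix (Fin N) (Fin N) ℕ),
        adjMatrix' N G = permMatrix' N σ * Abar * (permMatrix' N σ)ᵀ ∧
        Abar.IsSymm ∧ (∀ n, Abar n n = 0) ∧ (∀ n m, Abar n m = 0 ∨ Abar n m = 1) ∧
        ∀ n : Fin N, (n : ℕ) < N - 1 →
          (∑ m ∈ Finset.univ.filter (fun m => n < m), Abar n m) = 1 := by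
  classical
  refine ⟨σ, Matrix.of fun a b => if G.Adj (σ a) (σ b) then 1 else 0, ?_, ?_, ?_, ?_, ?_⟩
  · ext i j
    rw [perm_conj]
    simp [adjMatrix']
  · rw [Matrix.IsSymm]
    ext i j
    simp only [Matrix.transpose_apply, Matrix.of_apply]
    congr 1
    simp only [eq_iff_iff]
    exact SimpleGraph.adj_comm _ _ _
  · intro n; simp
  · intro n m; simp only [Matrix.of_apply]; split <;> simp
  · intro n hn
    obtain ⟨m₀, hm₀, huni⟩ := horder n hn
    have hfil : Finset.univ.filter (fun m => n < m ∧ G.Adj (σ n) (σ m)) = {m₀} := by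
      ext m
      simp only [Finset.mem_filter, Finset.mem_univ, true_and, Finset.mem_singleton]
      exact ⟨fun hm => huni m hm, fun hm => hm ▸ hm₀⟩
    calc ∑ m ∈ Finset.univ.filter (fun m => n < m),
          (Matrix.of fun a b => if G.Adj (σ a) (σ b) then (1:ℕ) else 0) n m
        = ∑ m : Fin N, if n < m then (if G.Adj (σ n) (σ m) then 1 else 0) else 0 :=
          Finset.sum_filter _ _
      _ = ∑ m : Fin N, if n < m ∧ G.Adj (σ n) (σ m) then 1 else 0 := by
          refine Finset.sum_congr rfl fun m _ => ?_
          rw [ite_and]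
      _ = ∑ m ∈ Finset.univ.filter (fun m => n < m ∧ G.Adj (σ n) (σ m)), 1 :=
          (Finset.sum_filter _ _).symm
      _ = 1 := by rw [hfil]; simp

lemma backward_exists (N : ℕ) (G : SimpleGraph (Fin N)) [DecidableRel G.Adj]
    (σ : Equiv.Perm (Fin N)) (Abar : Matrix (Fin N) (Fin N) ℕ)
    (heq : adjMatrix' N G = permMatrix' N σ * Abar * (permMatrix' N σ)ᵀ)
    (h01 : ∀ n m, Abar n m = 0 ∨ Abar n m = 1)
    (hsum : ∀ n : Fin N, (n : ℕ) < N - 1 →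
          (∑ m ∈ Finset.univ.filter (fun m => n < m), Abar n m) = 1) :
    ∀ n : Fin N, (n : ℕ) < N - 1 → ∃! m : Fin N, n < m ∧ G.Adj (σ n) (σ m) := by
  classical
  have hadj : ∀ i j, G.Adj i j ↔ Abar (σ.symm i) (σ.symm j) = 1 := by
    intro i j
    have h1 : adjMatrix' N G i j = Abar (σ.symm i) (σ.symm j) := by
      rw [heq, perm_conj]
    constructor
    · intro h; rw [← h1]; simp [adjMatrix', h]
    · intro h
      by_contra hna
      rw [← h1] at h
      simp [adjMatrix', hna] at h
  intro n hn
  have key : (∑ m ∈ Finset.univ.filter (fun m => n < m), Abar n m)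
      = (Finset.univ.filter (fun m => n < m ∧ Abar n m = 1)).card := by
    calc ∑ m ∈ Finset.univ.filter (fun m => n < m), Abar n m
        = ∑ m : Fin N, if n < m then Abar n m else 0 := Finset.sum_filter _ _
      _ = ∑ m : Fin N, if n < m ∧ Abar n m = 1 then 1 else 0 := by
          refine Finset.sum_congr rfl fun m _ => ?_
          rcases h01 n m with h0 | h0 <;> rw [h0] <;> simp
      _ = ∑ m ∈ Finset.univ.filter (fun m => n < m ∧ Abar n m = 1), 1 :=
          (Finset.sum_filter _ _).symm
      _ = (Finset.univ.filter (fun m => n < m ∧ Abar n m = 1)).card := by simp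
  have hcard : (Finset.univ.filter (fun m => n < m ∧ Abar n m = 1)).card = 1 := by
    rw [← key]; exact hsum n hn
  obtain ⟨m₀, hm₀⟩ := Finset.card_eq_one.mp hcard
  have hmem : ∀ m : Fin N, (n < m ∧ Abar n m = 1) ↔ m = m₀ := by
    intro m
    constructor
    · intro hm
      have hmm : m ∈ Finset.filter (fun m => n < m ∧ Abar n m = 1) Finset.univ := by
        simp [hm.1, hm.2]
      rwa [hm₀, Finset.mem_singleton] at hmm
    · rintro rfl
      have hmm : m ∈ ({m} : Finset (Fin N)) := Finset.mem_singleton_self _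
      rw [← hm₀] at hmm
      simpa using hmm
  refine ⟨m₀, ?_, ?_⟩
  · have := (hmem m₀).mpr rfl
    refine ⟨this.1, ?_⟩
    rw [hadj]
    simpa using this.2
  · intro m hm
    rw [hadj] at hm
    simp only [Equiv.symm_apply_apply] at hm
    exact (hmem m).mp hm

/-- A simple graph on `N ≥ 2` vertices is a tree iff its adjacency matrix is permutation
similar to a symmetric 0–1 matrix with zero diagonal in which every row except the last
has exactly one nonzero entry to the right of the diagonal. -/
theorem stmt12 (N : ℕ) (hN : 2 ≤ N) (G : SimpleGraph (Fin N)) [DecidableRel G.Adj] :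
    G.IsTree ↔
      ∃ (σ : Equiv.Perm (Fin N)) (Abar : Matrix (Fin N) (Fin N) ℕ),
        adjMatrix' N G = permMatrix' N σ * Abar * (permMatrix' N σ)ᵀ ∧
        Abar.IsSymm ∧ (∀ n, Abar n n = 0) ∧ (∀ n m, Abar n m = 0 ∨ Abar n m = 1) ∧
        ∀ n : Fin N, (n : ℕ) < N - 1 →
          (∑ m ∈ Finset.univ.filter (fun m => n < m), Abar n m) = 1 := by
  constructor
  · intro hG
    obtain ⟨σ, horder⟩ := forward_order hN G hG
    exact forward_exists N G σ horder
  · rintro ⟨σ, Abar, heq, hsym, hdiag, h01, hsum⟩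
    exact backward_tree hN G σ (backward_exists N G σ Abar heq h01 hsum)
end
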